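/- arXiv:2505.23592 — 3 statements merged into one kernel-verified Lean document; each statement's English description precedes it below -/
import Mathlib

section
/- If Z₁ satisfies ‖Z₁‖_q ≤ κ₁·q^{α₁} for all q ≥ 1 and Z₂ satisfies ‖Z₂‖_q ≤ κ₂·q^{α₂} for all q ≥ 1, then their product satisfies ‖Z₁Z₂‖_q ≤ [(α₁+α₂)^{α₁+α₂}/(α₁^{α₁}·α₂^{α₂})]·κ₁·κ₂·q^{α₁+α₂} for all q ≥ 1. -/
/-!
Split the exponent `q` as `1/q = 1/q₁ + 1/q₂` with `q₁ = q (α₁+α₂)/α₁` and `q₂ = q (α₁+α₂)/α₂`,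
both `≥ q ≥ 1`. Hölder's inequality gives `‖Z₁Z₂‖_q ≤ ‖Z₁‖_{q₁} ‖Z₂‖_{q₂} ≤ κ₁κ₂ q₁^{α₁} q₂^{α₂}`,
and `q₁^{α₁} q₂^{α₂}` is exactly `(α₁+α₂)^{α₁+α₂}/(α₁^{α₁} α₂^{α₂}) · q^{α₁+α₂}`.
-/

open MeasureTheory

lemma ENNReal.ofReal_mul_ofReal_le (a b : ℝ) :
    ENNReal.ofReal a * ENNReal.ofReal b ≤ ENNReal.ofReal (a * b) := by
  rcases le_or_gt 0 a with ha | ha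
  · rw [ENNReal.ofReal_mul ha]
  · simp [ENNReal.ofReal_of_nonpos ha.le]

lemma ENNReal.holderTriple_ofReal {p q r : ℝ} (hp : 0 < p) (hq : 0 < q)
    (hpqr : p⁻¹ + q⁻¹ = r⁻¹) :
    ENNReal.HolderTriple (ENNReal.ofReal p) (ENNReal.ofReal q) (ENNReal.ofReal r) := by
  have hr : 0 < r := inv_pos.mp (hpqr ▸ by positivity)
  refine ⟨?_⟩
  rw [← ENNReal.ofReal_inv_of_pos hp, ← ENNReal.ofReal_inv_of_pos hq,
    ← ENNReal.ofReal_inv_of_pos hr, ← ENNReal.ofReal_add (by positivity) (by positivity), hpqr]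

theorem MeasureTheory.eLpNorm_mul_le_mul_eLpNorm_ofReal {α 𝕜 : Type*} [MeasurableSpace α]
    [NormedRing 𝕜] {μ : Measure α} {f g : α → 𝕜} (hf : AEStronglyMeasurable f μ)
    (hg : AEStronglyMeasurable g μ) {p q r : ℝ} (hp : 0 < p) (hq : 0 < q)
    (hpqr : p⁻¹ + q⁻¹ = r⁻¹) :
    eLpNorm (fun x => f x * g x) (ENNReal.ofReal r) μ
      ≤ eLpNorm f (ENNReal.ofReal p) μ * eLpNorm g (ENNReal.ofReal q) μ := by
  have := ENNReal.holderTriple_ofReal hp hq hpqr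
  simpa only [Pi.smul_def, smul_eq_mul, Pi.mul_def] using eLpNorm_smul_le_mul_eLpNorm hg hf

lemma Real.mul_div_rpow_mul_mul_div_rpow {a b q : ℝ} (ha : 0 < a) (hb : 0 < b) (hq : 0 ≤ q) :
    (q * ((a + b) / a)) ^ a * (q * ((a + b) / b)) ^ b
      = (a + b) ^ (a + b) / (a ^ a * b ^ b) * q ^ (a + b) := by
  have hab : 0 < a + b := add_pos ha hb
  rw [Real.mul_rpow hq (by positivity), Real.mul_rpow hq (by positivity),
    Real.div_rpow hab.le ha.le, Real.div_rpow hab.le hb.le,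
    Real.rpow_add hab, Real.rpow_add' hq hab.ne']
  have := (Real.rpow_pos_of_pos ha a).ne'
  have := (Real.rpow_pos_of_pos hb b).ne'
  field_simp

lemma one_le_mul_div_of_le {q a s : ℝ} (hq : 1 ≤ q) (ha : 0 < a) (has : a ≤ s) :
    1 ≤ q * (s / a) :=
  hq.trans (le_mul_of_one_le_right (by linarith) ((one_le_div ha).mpr has))

theorem subWeibull_product_general
    {Ω : Type*} [MeasurableSpace Ω] (μ : Measure Ω)
    (Z₁ Z₂ : Ω → ℝ) (hZ₁ : AEStronglyMeasurable Z₁ μ) (hZ₂ : AEStronglyMeasurable Z₂ μ)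
    (κ₁ κ₂ α₁ α₂ : ℝ) (hα₁ : 0 < α₁) (hα₂ : 0 < α₂)
    (hmom₁ : ∀ q : ℝ, 1 ≤ q →
      eLpNorm Z₁ (ENNReal.ofReal q) μ ≤ ENNReal.ofReal (κ₁ * q ^ α₁))
    (hmom₂ : ∀ q : ℝ, 1 ≤ q →
      eLpNorm Z₂ (ENNReal.ofReal q) μ ≤ ENNReal.ofReal (κ₂ * q ^ α₂)) :
    ∀ q : ℝ, 1 ≤ q →
      eLpNorm (fun ω => Z₁ ω * Z₂ ω) (ENNReal.ofReal q) μ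
        ≤ ENNReal.ofReal
            ((α₁ + α₂) ^ (α₁ + α₂) / (α₁ ^ α₁ * α₂ ^ α₂) * κ₁ * κ₂ * q ^ (α₁ + α₂)) := by
  intro q hq
  have hq₁ : 1 ≤ q * ((α₁ + α₂) / α₁) := one_le_mul_div_of_le hq hα₁ (by linarith)
  have hq₂ : 1 ≤ q * ((α₁ + α₂) / α₂) := one_le_mul_div_of_le hq hα₂ (by linarith)
  have hsplit : (q * ((α₁ + α₂) / α₁))⁻¹ + (q * ((α₁ + α₂) / α₂))⁻¹ = q⁻¹ := by
    field_simp
  calc eLpNorm (fun ω => Z₁ ω * Z₂ ω) (ENNReal.ofReal q) μ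
      ≤ eLpNorm Z₁ (ENNReal.ofReal (q * ((α₁ + α₂) / α₁))) μ
          * eLpNorm Z₂ (ENNReal.ofReal (q * ((α₁ + α₂) / α₂))) μ :=
        eLpNorm_mul_le_mul_eLpNorm_ofReal hZ₁ hZ₂ (by linarith) (by linarith) hsplit
    _ ≤ ENNReal.ofReal (κ₁ * (q * ((α₁ + α₂) / α₁)) ^ α₁)
          * ENNReal.ofReal (κ₂ * (q * ((α₁ + α₂) / α₂)) ^ α₂) :=
        mul_le_mul' (hmom₁ _ hq₁) (hmom₂ _ hq₂)
    _ ≤ ENNReal.ofReal (κ₁ * (q * ((α₁ + α₂) / α₁)) ^ α₁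
          * (κ₂ * (q * ((α₁ + α₂) / α₂)) ^ α₂)) := ENNReal.ofReal_mul_ofReal_le _ _
    _ = ENNReal.ofReal
          ((α₁ + α₂) ^ (α₁ + α₂) / (α₁ ^ α₁ * α₂ ^ α₂) * κ₁ * κ₂ * q ^ (α₁ + α₂)) := by
        rw [mul_mul_mul_comm, Real.mul_div_rpow_mul_mul_div_rpow hα₁ hα₂ (by linarith)]
        congr 1
        ring

/-- **Product of sub-Weibull random variables.**
If `‖Z₁‖_q ≤ κ₁ q^{α₁}` and `‖Z₂‖_q ≤ κ₂ q^{α₂}` for all `q ≥ 1`, then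
`‖Z₁ Z₂‖_q ≤ ((α₁+α₂)^{α₁+α₂}/(α₁^{α₁} α₂^{α₂})) κ₁ κ₂ q^{α₁+α₂}` for all `q ≥ 1`. -/
theorem subWeibull_product
    {Ω : Type*} [MeasurableSpace Ω] (μ : Measure Ω) [IsProbabilityMeasure μ]
    (Z₁ Z₂ : Ω → ℝ) (hZ₁ : AEStronglyMeasurable Z₁ μ) (hZ₂ : AEStronglyMeasurable Z₂ μ)
    (κ₁ κ₂ α₁ α₂ : ℝ) (hκ₁ : 0 < κ₁) (hκ₂ : 0 < κ₂) (hα₁ : 0 < α₁) (hα₂ : 0 < α₂)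
    (hmom₁ : ∀ q : ℝ, 1 ≤ q →
      eLpNorm Z₁ (ENNReal.ofReal q) μ ≤ ENNReal.ofReal (κ₁ * q ^ α₁))
    (hmom₂ : ∀ q : ℝ, 1 ≤ q →
      eLpNorm Z₂ (ENNReal.ofReal q) μ ≤ ENNReal.ofReal (κ₂ * q ^ α₂)) :
    ∀ q : ℝ, 1 ≤ q →
      eLpNorm (fun ω => Z₁ ω * Z₂ ω) (ENNReal.ofReal q) μ
        ≤ ENNReal.ofReal
            ((α₁ + α₂) ^ (α₁ + α₂) / (α₁ ^ α₁ * α₂ ^ α₂) * κ₁ * κ₂ * q ^ (α₁ + α₂)) :=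
  subWeibull_product_general μ Z₁ Z₂ hZ₁ hZ₂ κ₁ κ₂ α₁ α₂ hα₁ hα₂ hmom₁ hmom₂
end

section
/- Second-order perturbation of a smooth loss: Let ℓ(x,·): F → ℝ be c₀-Lipschitz with c₁-Lipschitz gradient on a Hilbert space F. For an estimator f̂_n of the data, let f̂_n^i, f̂_n^j, f̂_n^{ij} denote the estimates with the indicated sample points replaced by independent copies, and define ε = max{‖f̂_n - f̂_n^j‖, ‖f̂_n^j - f̂_n^{ij}‖, ‖f̂_n - f̂_n^i‖, ‖f̂_n^i - f̂_n^{ij}‖, ‖f̂_n^j - f̂_n^{ij}‖} and the second-order difference ∇_i∇_j ℓ(x, f̂_n) = ℓ(x,f̂_n) - ℓ(x,f̂_n^i) - ℓ(x,f̂_n^j) + ℓ(x,f̂_n^{ij}). Then |∇_i∇_j ℓ(x, f̂_n)| ≤ c₀·‖f̂_n - f̂_n^i - f̂_n^j + f̂_n^{ij}‖ + 2c₁·ε². -/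
/-!
With `u = fa - fb` and `w = fc - fd`, the second difference is `g 1 - g 0` for
`g t = ℓ (fb + t • u) - ℓ (fd + t • w)`. At `γ₁ = fb + t • u`, `γ₂ = fd + t • w` the derivative
`⟪ℓ' γ₁, u⟫ - ⟪ℓ' γ₂, w⟫` splits as `⟪ℓ' γ₁ - ℓ' γ₂, u⟫ + ⟪ℓ' γ₂, u - w⟫`. The first term is at
most `c₁ ε²`, because `γ₁ - γ₂` is a convex combination of `fb - fd` and `fa - fc`; the second is
at most `c₀ ‖u - w‖`, because a `c₀`-Lipschitz function has gradient of norm at most `c₀`. The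
mean value theorem on `[0, 1]` concludes.
-/

open InnerProductSpace Set

theorem nonneg_of_forall_norm_sub_le_mul {E F : Type*} [NormedAddGroup E] [SeminormedAddGroup F]
    [Nontrivial E] {f : E → F} {C : ℝ}
    (h : ∀ x y, ‖f x - f y‖ ≤ C * ‖x - y‖) : 0 ≤ C := by
  obtain ⟨x, y, hxy⟩ := exists_pair_ne E
  exact nonneg_of_mul_nonneg_left ((norm_nonneg _).trans (h x y))
    (norm_pos_iff.2 (sub_ne_zero.2 hxy))

section Gradient

variable {E : Type*} [NormedAddCommGroup E] [InnerProductSpace ℝ E] [CompleteSpace E]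

theorem HasGradientAt.norm_le_of_lipschitz {f : E → ℝ} {f' x : E} {C : ℝ}
    (hf : HasGradientAt f f' x) (hC : 0 ≤ C) (hlip : ∀ y, |f y - f x| ≤ C * ‖y - x‖) :
    ‖f'‖ ≤ C := by
  rw [← (toDual ℝ E).norm_map f']
  exact hf.hasFDerivAt.le_of_lip' hC (.of_forall hlip)

theorem HasGradientAt.hasDerivAt_comp_add_smul {f : E → ℝ} {f' x v : E} {t : ℝ}
    (hf : HasGradientAt f f' (x + t • v)) :
    HasDerivAt (fun s : ℝ => f (x + s • v)) (inner ℝ f' v) t := by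
  have hline : HasDerivAt (fun s : ℝ => x + s • v) v t := by
    simpa using ((hasDerivAt_id t).smul_const v).const_add x
  have hcomp := hf.hasFDerivAt.comp_hasDerivAt t hline
  rw [toDual_apply_apply] at hcomp
  exact hcomp

end Gradient

theorem abs_inner_sub_inner_le {E : Type*} [SeminormedAddCommGroup E] [InnerProductSpace ℝ E]
    (p q u w : E) :
    |inner ℝ p u - inner ℝ q w| ≤ ‖p - q‖ * ‖u‖ + ‖q‖ * ‖u - w‖ := by
  have hsplit : inner ℝ p u - inner ℝ q w = inner ℝ (p - q) u + inner ℝ q (u - w) := by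
    simp only [inner_sub_left, inner_sub_right]
    ring
  rw [hsplit]
  exact (abs_add_le _ _).trans
    (add_le_add (abs_real_inner_le_norm _ _) (abs_real_inner_le_norm _ _))

theorem norm_add_smul_sub_add_smul_le {E : Type*} [SeminormedAddCommGroup E] [NormedSpace ℝ E]
    {x y v w : E} {t ε : ℝ} (ht : t ∈ Icc (0 : ℝ) 1) (h₀ : ‖x - y‖ ≤ ε)
    (h₁ : ‖(x + v) - (y + w)‖ ≤ ε) :
    ‖(x + t • v) - (y + t • w)‖ ≤ ε := by
  have hcombo : (x + t • v) - (y + t • w) = (1 - t) • (x - y) + t • ((x + v) - (y + w)) := by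
    module
  rw [hcombo, ← mem_closedBall_zero_iff]
  exact convex_closedBall 0 ε (mem_closedBall_zero_iff.2 h₀) (mem_closedBall_zero_iff.2 h₁)
    (by linarith [ht.2]) ht.1 (by ring)

theorem abs_sub_sub_add_le_of_lipschitz_gradient {E : Type*} [NormedAddCommGroup E]
    [InnerProductSpace ℝ E] [CompleteSpace E] {ℓ : E → ℝ} {ℓ' : E → E} {c₀ c₁ ε : ℝ}
    (hgrad : ∀ f, HasGradientAt ℓ (ℓ' f) f) (hc₁ : 0 ≤ c₁) (hbound : ∀ f, ‖ℓ' f‖ ≤ c₀)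
    (hlip₁ : ∀ f f', ‖ℓ' f - ℓ' f'‖ ≤ c₁ * ‖f - f'‖) {fa fb fc fd : E}
    (hab : ‖fa - fb‖ ≤ ε) (hac : ‖fa - fc‖ ≤ ε) (hbd : ‖fb - fd‖ ≤ ε) :
    |ℓ fa - ℓ fb - ℓ fc + ℓ fd| ≤ c₀ * ‖fa - fb - fc + fd‖ + c₁ * ε ^ 2 := by
  set u := fa - fb with hu
  set w := fc - fd with hw
  have hderiv : ∀ t : ℝ, HasDerivAt (fun s : ℝ => ℓ (fb + s • u) - ℓ (fd + s • w))
      (inner ℝ (ℓ' (fb + t • u)) u - inner ℝ (ℓ' (fd + t • w)) w) t := fun t =>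
    (hgrad _).hasDerivAt_comp_add_smul.sub (hgrad _).hasDerivAt_comp_add_smul
  have hderiv_le : ∀ t ∈ Icc (0 : ℝ) 1,
      ‖inner ℝ (ℓ' (fb + t • u)) u - inner ℝ (ℓ' (fd + t • w)) w‖ ≤
        c₀ * ‖u - w‖ + c₁ * ε ^ 2 := by
    intro t ht
    have hclose : ‖(fb + t • u) - (fd + t • w)‖ ≤ ε :=
      norm_add_smul_sub_add_smul_le ht hbd (by simpa [u, w] using hac)
    calc _ ≤ ‖ℓ' (fb + t • u) - ℓ' (fd + t • w)‖ * ‖u‖ + ‖ℓ' (fd + t • w)‖ * ‖u - w‖ :=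
          abs_inner_sub_inner_le _ _ _ _
      _ ≤ (c₁ * ε) * ε + c₀ * ‖u - w‖ := by
          gcongr
          · exact mul_nonneg hc₁ ((norm_nonneg _).trans hclose)
          · exact (hlip₁ _ _).trans (by gcongr)
          · exact hbound _
      _ = c₀ * ‖u - w‖ + c₁ * ε ^ 2 := by ring
  have hmvt := norm_image_sub_le_of_norm_deriv_le_segment_01'
    (fun t _ => (hderiv t).hasDerivWithinAt) (fun t ht => hderiv_le t (Ico_subset_Icc_self ht))
  have hsum : fa - fb - fc + fd = u - w := by rw [hu, hw]; abel
  have hends : ℓ fa - ℓ fb - ℓ fc + ℓ fd = ℓ (fb + u) - ℓ (fd + w) - (ℓ fb - ℓ fd) := by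
    rw [hu, hw, add_sub_cancel, add_sub_cancel]
    ring
  simp only [one_smul, zero_smul, add_zero, Real.norm_eq_abs] at hmvt
  rwa [hsum, hends]

/-- **Second-order perturbation of a smooth loss.**
If `ℓ` is `c₀`-Lipschitz with `c₁`-Lipschitz gradient `ℓ'`, then for the four estimates
`f̂ₙ, f̂ₙⁱ, f̂ₙʲ, f̂ₙⁱʲ` (denoted `fa, fb, fc, fd`), with
`ε = max{‖fa-fc‖, ‖fc-fd‖, ‖fa-fb‖, ‖fb-fd‖, ‖fc-fd‖}`, the second-order difference
satisfies `|ℓ fa - ℓ fb - ℓ fc + ℓ fd| ≤ c₀ ‖fa - fb - fc + fd‖ + 2 c₁ ε²`. -/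
theorem second_order_loss_perturbation
    {F : Type*} [NormedAddCommGroup F] [InnerProductSpace ℝ F] [CompleteSpace F]
    (ℓ : F → ℝ) (ℓ' : F → F) (c₀ c₁ : ℝ)
    (hgrad : ∀ f : F, HasGradientAt ℓ (ℓ' f) f)
    (hlip₀ : ∀ f f' : F, |ℓ f - ℓ f'| ≤ c₀ * ‖f - f'‖)
    (hlip₁ : ∀ f f' : F, ‖ℓ' f - ℓ' f'‖ ≤ c₁ * ‖f - f'‖)
    (fa fb fc fd : F) :
    |ℓ fa - ℓ fb - ℓ fc + ℓ fd|
      ≤ c₀ * ‖fa - fb - fc + fd‖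
        + 2 * c₁ *
          max (max (max (max ‖fa - fc‖ ‖fc - fd‖) ‖fa - fb‖) ‖fb - fd‖) ‖fc - fd‖ ^ 2 := by
  -- on the zero space the constants `c₀`, `c₁` may be negative
  rcases subsingleton_or_nontrivial F with hF | hF
  · simp [Subsingleton.elim fb fa, Subsingleton.elim fc fa, Subsingleton.elim fd fa]
  have hc₀ : 0 ≤ c₀ := nonneg_of_forall_norm_sub_le_mul (f := ℓ) hlip₀
  have hc₁ : 0 ≤ c₁ := nonneg_of_forall_norm_sub_le_mul hlip₁
  have hbound : ∀ f, ‖ℓ' f‖ ≤ c₀ := fun f =>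
    (hgrad f).norm_le_of_lipschitz hc₀ fun y => hlip₀ y f
  set ε := max (max (max (max ‖fa - fc‖ ‖fc - fd‖) ‖fa - fb‖) ‖fb - fd‖) ‖fc - fd‖
  have hab : ‖fa - fb‖ ≤ ε := by simp [ε]
  have hac : ‖fa - fc‖ ≤ ε := by simp [ε]
  have hbd : ‖fb - fd‖ ≤ ε := by simp [ε]
  have hsecond := abs_sub_sub_add_le_of_lipschitz_gradient hgrad hc₁ hbound hlip₁ hab hac hbd
  linarith [mul_nonneg hc₁ (sq_nonneg ε)]
end

section
/- Single-step deviation exponential decay for sieve SGD: Consider the recursion η_t = η_{t-1} - α_t·Λ_t·Z_t·Z_t^T·η_{t-1} in a Hilbert space, where Λ_t is a diagonal positive semidefinite matrix whose j-th diagonal entry is j^{-2w}·1{j ≤ J_t}, α_t‖Λ_t^{1/2}Z_t‖² ≤ 1 almost surely, and E[Z_t Z_t^T | past] ⪰ I on the active coordinates. With η̃_t = Λ_t^{-1/2}η_t, we have E[‖η̃_t‖²/‖η̃_{t-1}‖² | D_{t-1}] ≤ exp(-α_t·J_t^{-2w}) almost surely, and consequently E[‖η̃_t‖² | D_i] ≤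 ‖η̃_i‖²·exp(-Σ_{l=i+1}^t α_l·J_l^{-2w}). -/
open MeasureTheory ProbabilityTheory

/-!
Expanding the update gives
`‖η̃_t‖² = ‖η̃_{t-1}‖² - (2α_t - α_t² ‖Λ_t^{1/2} Z_t‖²) ⟨Z_t, η_{t-1}⟩²`, and the step-size
condition bounds this by `‖η̃_{t-1}‖² - α_t ⟨Z_t, η_{t-1}⟩²`. As `Z_t` is independent of the past
with orthonormal second moments, `E[⟨Z_t, η_{t-1}⟩² | D_{t-1}] = ‖η_{t-1}‖²`; and as `Λ_t` vanishes
beyond `J_t` with `J` nondecreasing, `η_{t-1}` lives on the first `J_t` coordinates, so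
`‖η_{t-1}‖² ≥ J_t^{-2w} ‖η̃_{t-1}‖²`. Hence `E[‖η̃_t‖² | D_{t-1}] ≤ (1 - α_t J_t^{-2w}) ‖η̃_{t-1}‖²`,
and `1 - x ≤ exp(-x)`. Dividing by the `D_{t-1}`-measurable `‖η̃_{t-1}‖²` gives the ratio bound,
and the tower property iterates the one-step bound.
-/

/-- Diagonal weights `λ_{t,j} = j^{-2w} 1{j ≤ J_t}` (coordinates indexed from 1). -/
noncomputable def sieveLam (w : ℝ) (J : ℕ → ℕ) (t : ℕ) {d : ℕ} (j : Fin d) : ℝ :=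
  if (j : ℕ) + 1 ≤ J t then (((j : ℕ) + 1 : ℝ)) ^ (-(2 * w)) else 0

/-- The normalization `η̃ = Λ^{-1/2} η` (with `0/0 = 0`), which on vectors supported on
the active coordinates is coordinatewise multiplication by `j^w`. -/
noncomputable def sieveTilde (w : ℝ) {d : ℕ} (v : Fin d → ℝ) (j : Fin d) : ℝ :=
  (((j : ℕ) + 1 : ℝ)) ^ w * v j

lemma rpow_neg_two_mul_mul_rpow_sq {p : ℝ} (hp : 0 < p) (w : ℝ) :
    p ^ (-(2 * w)) * (p ^ w) ^ 2 = 1 := by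
  rw [← Real.rpow_natCast, ← Real.rpow_mul hp.le, ← Real.rpow_add hp]
  ring_nf
  exact Real.rpow_zero p

lemma sieveLam_mul_rpow_sq (w : ℝ) (J : ℕ → ℕ) (t : ℕ) {d : ℕ} (j : Fin d) :
    sieveLam w J t j * ((((j : ℕ) + 1 : ℝ)) ^ w) ^ 2
      = if (j : ℕ) + 1 ≤ J t then 1 else 0 := by
  unfold sieveLam
  split_ifs
  · exact rpow_neg_two_mul_mul_rpow_sq (by positivity) w
  · simp

lemma sum_sieveTilde_sq_of_eq_sub {w : ℝ} {J : ℕ → ℕ} {t d : ℕ} {a : ℝ}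
    {z v v' : Fin d → ℝ}
    (hv : ∀ j : Fin d, J t < (j : ℕ) + 1 → v j = 0)
    (hv' : ∀ j, v' j = v j - a * sieveLam w J t j * z j * ∑ j', z j' * v j') :
    ∑ j, sieveTilde w v' j ^ 2 = ∑ j, sieveTilde w v j ^ 2
      - (2 * a - a ^ 2 * ∑ j, sieveLam w J t j * z j ^ 2) * (∑ j', z j' * v j') ^ 2 := by
  set S := ∑ j', z j' * v j'
  have hterm : ∀ j, sieveTilde w v' j ^ 2 = sieveTilde w v j ^ 2 - 2 * (a * S) * (z j * v j)
      + (a * S) ^ 2 * (sieveLam w J t j * z j ^ 2) := by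
    intro j
    have hind := sieveLam_mul_rpow_sq w J t j
    have hvj : (if (j : ℕ) + 1 ≤ J t then 1 else 0) * v j = v j := by
      split_ifs with h
      · exact one_mul _
      · rw [hv j (not_le.mp h), mul_zero]
    have hlam : (if (j : ℕ) + 1 ≤ J t then 1 else 0) * sieveLam w J t j = sieveLam w J t j := by
      unfold sieveLam; split_ifs <;> simp
    rw [sieveTilde, sieveTilde, hv' j]
    -- With `p_j = j^w`: `λ_j p_j² λ_j = λ_j` always, and `λ_j p_j² v_j = v_j` because `v`
    -- lives on the active coordinates.
    linear_combination (-2 * a * S * z j * v j + (a * S) ^ 2 * z j ^ 2 * sieveLam w J t j) * hind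
      + (-2 * a * S * z j) * hvj + ((a * S) ^ 2 * z j ^ 2) * hlam
  simp_rw [hterm, Finset.sum_add_distrib, Finset.sum_sub_distrib, ← Finset.mul_sum]
  ring

lemma sum_sieveTilde_sq_le_of_eq_sub {w : ℝ} {J : ℕ → ℕ} {t d : ℕ} {a : ℝ}
    {z v v' : Fin d → ℝ}
    (ha : 0 ≤ a) (hstep : a * ∑ j, sieveLam w J t j * z j ^ 2 ≤ 1)
    (hv : ∀ j : Fin d, J t < (j : ℕ) + 1 → v j = 0)
    (hv' : ∀ j, v' j = v j - a * sieveLam w J t j * z j * ∑ j', z j' * v j') :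
    ∑ j, sieveTilde w v' j ^ 2
      ≤ ∑ j, sieveTilde w v j ^ 2 - a * (∑ j', z j' * v j') ^ 2 := by
  rw [sum_sieveTilde_sq_of_eq_sub hv hv']
  have hcoef : a ≤ 2 * a - a ^ 2 * ∑ j, sieveLam w J t j * z j ^ 2 := by
    nlinarith [mul_le_mul_of_nonneg_left hstep ha]
  nlinarith [mul_le_mul_of_nonneg_right hcoef (sq_nonneg (∑ j', z j' * v j'))]

lemma sq_le_sieveTilde_sq {w : ℝ} (hw : 0 ≤ w) {d : ℕ} (v : Fin d → ℝ) (j : Fin d) :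
    v j ^ 2 ≤ sieveTilde w v j ^ 2 := by
  rw [sieveTilde, mul_pow]
  refine le_mul_of_one_le_left (sq_nonneg _) (one_le_pow₀ (Real.one_le_rpow ?_ hw))
  simp

lemma rpow_neg_mul_sum_sieveTilde_sq_le {w : ℝ} (hw : 0 ≤ w) {d N : ℕ} {v : Fin d → ℝ}
    (hv : ∀ j : Fin d, N < (j : ℕ) + 1 → v j = 0) :
    (N : ℝ) ^ (-(2 * w)) * ∑ j, sieveTilde w v j ^ 2 ≤ ∑ j, v j ^ 2 := by
  rw [Finset.mul_sum]
  refine Finset.sum_le_sum fun j _ => ?_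
  by_cases hj : (j : ℕ) + 1 ≤ N
  · have hp : (0 : ℝ) < (j : ℕ) + 1 := by positivity
    have hle : (N : ℝ) ^ (-(2 * w)) ≤ (((j : ℕ) + 1 : ℝ)) ^ (-(2 * w)) :=
      Real.rpow_le_rpow_of_nonpos hp (by exact_mod_cast hj) (by linarith)
    calc (N : ℝ) ^ (-(2 * w)) * sieveTilde w v j ^ 2
        ≤ (((j : ℕ) + 1 : ℝ)) ^ (-(2 * w)) * sieveTilde w v j ^ 2 :=
          mul_le_mul_of_nonneg_right hle (sq_nonneg _)
      _ = v j ^ 2 := by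
          rw [sieveTilde, mul_pow, ← mul_assoc, rpow_neg_two_mul_mul_rpow_sq hp, one_mul]
  · simp [sieveTilde, hv j (not_le.mp hj)]

lemma sieve_support_of_recursion {Ω : Type*} {d : ℕ} {w : ℝ} {J : ℕ → ℕ}
    (hJmono : Monotone J) {α : ℕ → ℝ} {Z η : ℕ → Ω → Fin d → ℝ} {i : ℕ}
    (hrec : ∀ t, i < t → ∀ ω j, η t ω j
      = η (t - 1) ω j - α t * sieveLam w J t j * Z t ω j * ∑ j', Z t ω j' * η (t - 1) ω j')
    (hsupp : ∀ ω (j : Fin d), J i < (j : ℕ) + 1 → η i ω j = 0) :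
    ∀ t, i ≤ t → ∀ ω (j : Fin d), J t < (j : ℕ) + 1 → η t ω j = 0 := by
  intro t ht
  induction t, ht using Nat.le_induction with
  | base => exact hsupp
  | succ t ht ih =>
    intro ω j hj
    have hlam : sieveLam w J (t + 1) j = 0 := by simp [sieveLam, not_le.mpr hj]
    rw [hrec (t + 1) (Nat.lt_succ_of_le ht), Nat.add_sub_cancel,
      ih ω j ((hJmono (Nat.le_succ t)).trans_lt hj), hlam]
    ring

lemma sq_sum_mul_eq_sum_prod {ι : Type*} [Fintype ι] (z v : ι → ℝ) :
    (∑ j, z j * v j) ^ 2 = ∑ p : ι × ι, (v p.1 * v p.2) * (z p.1 * z p.2) := by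
  rw [sq, Finset.sum_mul_sum, Fintype.sum_prod_type]
  exact Finset.sum_congr rfl fun j _ => Finset.sum_congr rfl fun j' _ => by ring

section QuadraticForm

variable {Ω ι : Type*} {m m0 : MeasurableSpace Ω} {μ : Measure Ω} {Z v : Ω → ι → ℝ}

lemma norm_mul_apply_le_of_abs_le {C : ℝ} (hC : ∀ ω j, |Z ω j| ≤ C) (ω : Ω)
    (p : ι × ι) :
    ‖Z ω p.1 * Z ω p.2‖ ≤ C * C := by
  rw [norm_mul]
  exact mul_le_mul (hC ω p.1) (hC ω p.2) (norm_nonneg _) ((abs_nonneg _).trans (hC ω p.1))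

lemma integrable_mul_mul_of_bounded (hZ : Measurable Z) (hZbdd : ∃ C, ∀ ω j, |Z ω j| ≤ C)
    (hv : ∀ j, AEStronglyMeasurable (fun ω => v ω j) μ)
    (hv2 : ∀ j, Integrable (fun ω => v ω j ^ 2) μ) (p : ι × ι) :
    Integrable (fun ω => (v ω p.1 * v ω p.2) * (Z ω p.1 * Z ω p.2)) μ := by
  obtain ⟨C, hC⟩ := hZbdd
  have hL2 : ∀ j, MemLp (fun ω => v ω j) 2 μ :=
    fun j => (memLp_two_iff_integrable_sq (hv j)).2 (hv2 j)
  exact ((hL2 p.1).integrable_mul (hL2 p.2)).mul_bdd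
    (((measurable_pi_apply p.1).comp hZ).mul
      ((measurable_pi_apply p.2).comp hZ)).aestronglyMeasurable
    (Filter.Eventually.of_forall (norm_mul_apply_le_of_abs_le hC · p))

lemma integrable_sq_sum_mul [Fintype ι] (hZ : Measurable Z)
    (hZbdd : ∃ C, ∀ ω j, |Z ω j| ≤ C)
    (hv : ∀ j, AEStronglyMeasurable (fun ω => v ω j) μ)
    (hv2 : ∀ j, Integrable (fun ω => v ω j ^ 2) μ) :
    Integrable (fun ω => (∑ j, Z ω j * v ω j) ^ 2) μ := by
  simp_rw [sq_sum_mul_eq_sum_prod]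
  exact integrable_finsetSum _ fun p _ => integrable_mul_mul_of_bounded hZ hZbdd hv hv2 p

lemma condExp_sq_sum_mul_of_indep [Fintype ι] [DecidableEq ι] [IsProbabilityMeasure μ]
    (hm : m ≤ m0) (hZ : Measurable Z) (hZbdd : ∃ C, ∀ ω j, |Z ω j| ≤ C)
    (hindep : Indep (MeasurableSpace.comap Z MeasurableSpace.pi) m μ)
    (horth : ∀ j j', ∫ ω, Z ω j * Z ω j' ∂μ = if j = j' then 1 else 0)
    (hv : ∀ j, StronglyMeasurable[m] fun ω => v ω j)
    (hv2 : ∀ j, Integrable (fun ω => v ω j ^ 2) μ) :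
    μ[fun ω => (∑ j, Z ω j * v ω j) ^ 2 | m] =ᵐ[μ] fun ω => ∑ j, v ω j ^ 2 := by
  have hv0 : ∀ j, AEStronglyMeasurable (fun ω => v ω j) μ :=
    fun j => ((hv j).mono hm).aestronglyMeasurable
  have hZZ : ∀ p : ι × ι, StronglyMeasurable[MeasurableSpace.comap Z MeasurableSpace.pi]
      fun ω => Z ω p.1 * Z ω p.2 := fun p =>
    (((measurable_pi_apply p.1).comp (comap_measurable Z)).mul
      ((measurable_pi_apply p.2).comp (comap_measurable Z))).stronglyMeasurable
  have hterm : ∀ p : ι × ι, μ[fun ω => (v ω p.1 * v ω p.2) * (Z ω p.1 * Z ω p.2) | m]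
      =ᵐ[μ] fun ω => v ω p.1 * v ω p.2 * if p.1 = p.2 then 1 else 0 := by
    intro p
    have hZZint : Integrable (fun ω => Z ω p.1 * Z ω p.2) μ := by
      obtain ⟨C, hC⟩ := hZbdd
      exact Integrable.of_bound ((hZZ p).mono hZ.comap_le).aestronglyMeasurable (C * C)
        (Filter.Eventually.of_forall (norm_mul_apply_le_of_abs_le hC · p))
    filter_upwards [condExp_mul_of_stronglyMeasurable_left (m := m) ((hv p.1).mul (hv p.2))
      (integrable_mul_mul_of_bounded hZ hZbdd hv0 hv2 p) hZZint,
      condExp_indep_eq hZ.comap_le hm (hZZ p) hindep] with ω hpull hmean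
    refine hpull.trans ?_
    simp only [Pi.mul_apply, hmean, horth]
  have hsum := condExp_finsetSum (s := Finset.univ)
    (fun p _ => integrable_mul_mul_of_bounded hZ hZbdd hv0 hv2 p) m
  simp_rw [sq_sum_mul_eq_sum_prod]
  filter_upwards [hsum, ae_all_iff.2 hterm] with ω hω hterms
  rw [← Finset.sum_fn, hω, Finset.sum_apply]
  simp_rw [hterms, Fintype.sum_prod_type, mul_ite, mul_one, mul_zero, Finset.sum_ite_eq,
    Finset.mem_univ, if_true, sq]

end QuadraticForm

section CondExp

variable {Ω : Type*} {m m0 : MeasurableSpace Ω} {μ : Measure Ω} [IsFiniteMeasure μ]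

lemma condExp_le_sub_smul_condExp (hm : m ≤ m0) {X Y Q : Ω → ℝ} (a : ℝ)
    (hX : Integrable X μ) (hY : StronglyMeasurable[m] Y) (hYint : Integrable Y μ)
    (hQ : Integrable Q μ) (hle : X ≤ᵐ[μ] Y - a • Q) :
    μ[X | m] ≤ᵐ[μ] Y - a • μ[Q | m] := by
  have hQa : Integrable (a • Q) μ := hQ.smul a
  filter_upwards [condExp_mono (m := m) hX (hYint.sub hQa) hle, condExp_sub hYint hQa m,
    condExp_smul a Q m] with ω hmono hsub hsmul
  rwa [hsub, Pi.sub_apply, hsmul, condExp_of_stronglyMeasurable hm hY hYint] at hmono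

lemma condExp_div_le_of_condExp_le_mul (hm : m ≤ m0) {X Y : Ω → ℝ} {r : ℝ} (hr : 0 ≤ r)
    (hX : Integrable X μ) (hY : StronglyMeasurable[m] Y)
    (hXnn : ∀ᵐ ω ∂μ, 0 ≤ X ω) (hXY : ∀ᵐ ω ∂μ, X ω ≤ Y ω)
    (hle : μ[X | m] ≤ᵐ[μ] fun ω => r * Y ω) :
    ∀ᵐ ω ∂μ, μ[fun ω => X ω / Y ω | m] ω ≤ r := by
  have hYinv : StronglyMeasurable[m] fun ω => (Y ω)⁻¹ :=
    (hY.measurable.inv).stronglyMeasurable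
  have hratio : Integrable ((fun ω => (Y ω)⁻¹) * X) μ := by
    refine Integrable.of_bound ((hYinv.mono hm).aestronglyMeasurable.mul hX.1) 1 ?_
    filter_upwards [hXnn, hXY] with ω h0 h1
    rw [Pi.mul_apply, norm_mul, norm_inv, Real.norm_of_nonneg h0,
      Real.norm_of_nonneg (h0.trans h1)]
    exact inv_mul_le_one_of_le₀ h1 (h0.trans h1)
  have hdiv : (fun ω => X ω / Y ω) = (fun ω => (Y ω)⁻¹) * X := by
    funext ω; exact div_eq_inv_mul _ _
  filter_upwards [condExp_mul_of_stronglyMeasurable_left hYinv hratio hX, hle, hXnn, hXY]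
    with ω hpull hω h0 h1
  rw [hdiv, hpull, Pi.mul_apply]
  rcases (h0.trans h1).eq_or_lt with hY0 | hYpos
  · rw [← hY0, inv_zero, zero_mul]; exact hr
  · calc (Y ω)⁻¹ * μ[X | m] ω ≤ (Y ω)⁻¹ * (r * Y ω) :=
          mul_le_mul_of_nonneg_left hω (inv_nonneg.2 hYpos.le)
      _ = r := by field_simp

lemma condExp_le_prod_mul_of_condExp_le {ℱ : ℕ → MeasurableSpace Ω}
    (hℱ : ∀ t, ℱ t ≤ m0) (hℱmono : Monotone ℱ)
    {X : ℕ → Ω → ℝ} {r : ℕ → ℝ} {i : ℕ} (hr : ∀ t, 0 ≤ r t)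
    (hX : ∀ t, Integrable (X t) μ) (hXi : StronglyMeasurable[ℱ i] (X i))
    (hstep : ∀ t, i < t → μ[X t | ℱ (t - 1)] ≤ᵐ[μ] fun ω => r t * X (t - 1) ω) :
    ∀ t, i ≤ t →
      μ[X t | ℱ i] ≤ᵐ[μ] fun ω => (∏ l ∈ Finset.Ioc i t, r l) * X i ω := by
  intro t ht
  induction t, ht using Nat.le_induction with
  | base =>
    rw [condExp_of_stronglyMeasurable (hℱ i) hXi (hX i)]
    filter_upwards with ω
    simp
  | succ t ht ih =>
    have hstep' := hstep (t + 1) (Nat.lt_succ_of_le ht)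
    rw [Nat.add_sub_cancel] at hstep'
    filter_upwards [(condExp_condExp_of_le (f := X (t + 1)) (hℱmono ht) (hℱ t)).symm,
      condExp_mono (m := ℱ i) integrable_condExp ((hX t).const_mul (r (t + 1))) hstep',
      condExp_smul (m := ℱ i) (r (t + 1)) (X t), ih] with ω htower hmono hsmul hih
    calc μ[X (t + 1) | ℱ i] ω = μ[μ[X (t + 1) | ℱ t] | ℱ i] ω := htower
      _ ≤ μ[fun ω => r (t + 1) * X t ω | ℱ i] ω := hmono
      _ = r (t + 1) * μ[X t | ℱ i] ω := hsmul
      _ ≤ r (t + 1) * ((∏ l ∈ Finset.Ioc i t, r l) * X i ω) :=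
          mul_le_mul_of_nonneg_left hih (hr _)
      _ = (∏ l ∈ Finset.Ioc i (t + 1), r l) * X i ω := by
          rw [Finset.prod_Ioc_succ_top ht]; ring

end CondExp

section Sieve

variable {Ω : Type*} {m m0 : MeasurableSpace Ω} {μ : Measure Ω} {d : ℕ} {w : ℝ}

lemma stronglyMeasurable_sum_sieveTilde_sq {v : Ω → Fin d → ℝ}
    (hv : ∀ j, Measurable[m] fun ω => v ω j) :
    StronglyMeasurable[m] fun ω => ∑ j, sieveTilde w (v ω) j ^ 2 :=
  (Finset.measurable_sum _ fun j _ => (measurable_const.mul (hv j)).pow_const 2).stronglyMeasurable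

lemma integrable_sq_of_integrable_sum_sieveTilde_sq (hw : 0 ≤ w) {v : Ω → Fin d → ℝ}
    (hv : ∀ j, AEStronglyMeasurable (fun ω => v ω j) μ)
    (hint : Integrable (fun ω => ∑ j, sieveTilde w (v ω) j ^ 2) μ) (j : Fin d) :
    Integrable (fun ω => v ω j ^ 2) μ :=
  hint.mono' ((hv j).pow 2) (Filter.Eventually.of_forall fun ω => by
    rw [Real.norm_of_nonneg (sq_nonneg _)]
    exact (sq_le_sieveTilde_sq hw (v ω) j).trans
      (Finset.single_le_sum (fun j _ => sq_nonneg (sieveTilde w (v ω) j)) (Finset.mem_univ j)))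

lemma condExp_sum_sieveTilde_sq_step_le [IsProbabilityMeasure μ] (hm : m ≤ m0) (hw : 0 ≤ w)
    {J : ℕ → ℕ} {t : ℕ} {a : ℝ} (ha : 0 ≤ a) {Z v v' : Ω → Fin d → ℝ}
    (hZ : Measurable Z) (hZbdd : ∃ C, ∀ ω j, |Z ω j| ≤ C)
    (hindep : Indep (MeasurableSpace.comap Z MeasurableSpace.pi) m μ)
    (horth : ∀ j j', ∫ ω, Z ω j * Z ω j' ∂μ = if j = j' then 1 else 0)
    (hv : ∀ j, Measurable[m] fun ω => v ω j)
    (hstep : ∀ᵐ ω ∂μ, a * ∑ j, sieveLam w J t j * Z ω j ^ 2 ≤ 1)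
    (hsupp : ∀ ω (j : Fin d), J t < (j : ℕ) + 1 → v ω j = 0)
    (hv' : ∀ ω j, v' ω j = v ω j - a * sieveLam w J t j * Z ω j * ∑ j', Z ω j' * v ω j')
    (hint : Integrable (fun ω => ∑ j, sieveTilde w (v ω) j ^ 2) μ)
    (hint' : Integrable (fun ω => ∑ j, sieveTilde w (v' ω) j ^ 2) μ) :
    μ[fun ω => ∑ j, sieveTilde w (v' ω) j ^ 2 | m] ≤ᵐ[μ]
      fun ω => Real.exp (-(a * (J t : ℝ) ^ (-(2 * w)))) * ∑ j, sieveTilde w (v ω) j ^ 2 := by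
  have hvsm : ∀ j, StronglyMeasurable[m] fun ω => v ω j := fun j => (hv j).stronglyMeasurable
  have hv0 : ∀ j, AEStronglyMeasurable (fun ω => v ω j) μ :=
    fun j => ((hvsm j).mono hm).aestronglyMeasurable
  have hv2 := integrable_sq_of_integrable_sum_sieveTilde_sq hw hv0 hint
  have hdecr : (fun ω => ∑ j, sieveTilde w (v' ω) j ^ 2) ≤ᵐ[μ]
      (fun ω => ∑ j, sieveTilde w (v ω) j ^ 2)
        - a • fun ω => (∑ j, Z ω j * v ω j) ^ 2 := by
    filter_upwards [hstep] with ω hω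
    exact sum_sieveTilde_sq_le_of_eq_sub ha hω (hsupp ω) (hv' ω)
  filter_upwards [condExp_le_sub_smul_condExp hm a hint' (stronglyMeasurable_sum_sieveTilde_sq hv)
      hint (integrable_sq_sum_mul hZ hZbdd hv0 hv2) hdecr,
    condExp_sq_sum_mul_of_indep hm hZ hZbdd hindep horth hvsm hv2] with ω hω hcond
  rw [Pi.sub_apply, Pi.smul_apply, hcond, smul_eq_mul] at hω
  set Y := ∑ j, sieveTilde w (v ω) j ^ 2
  calc μ[fun ω => ∑ j, sieveTilde w (v' ω) j ^ 2 | m] ω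
      ≤ Y - a * ∑ j, v ω j ^ 2 := hω
    _ ≤ Y - a * ((J t : ℝ) ^ (-(2 * w)) * Y) :=
        sub_le_sub_left (mul_le_mul_of_nonneg_left
          (rpow_neg_mul_sum_sieveTilde_sq_le hw (hsupp ω)) ha) _
    _ = (-(a * (J t : ℝ) ^ (-(2 * w))) + 1) * Y := by ring
    _ ≤ Real.exp (-(a * (J t : ℝ) ^ (-(2 * w)))) * Y :=
        mul_le_mul_of_nonneg_right (Real.add_one_le_exp _)
          (Finset.sum_nonneg fun j _ => sq_nonneg _)

end Sieve

theorem sieve_sgd_deviation_decay_general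
    {Ω : Type*} [m0 : MeasurableSpace Ω] (μ : Measure Ω) [IsProbabilityMeasure μ]
    (d : ℕ) (w : ℝ) (hw : 0 ≤ w)
    (J : ℕ → ℕ) (hJmono : Monotone J)
    (α : ℕ → ℝ) (hα : ∀ t, 0 ≤ α t)
    (ℱ : ℕ → MeasurableSpace Ω) (hℱ : ∀ t, ℱ t ≤ m0) (hℱmono : Monotone ℱ)
    (Z η : ℕ → Ω → Fin d → ℝ) (i : ℕ)
    (hZmeas : ∀ t j, Measurable[ℱ t] fun ω => Z t ω j)
    (hηmeas : ∀ t j, Measurable[ℱ t] fun ω => η t ω j)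
    (hZindep : ∀ t, i < t →
      Indep (MeasurableSpace.comap (Z t) MeasurableSpace.pi) (ℱ (t - 1)) μ)
    (horth : ∀ t (j j' : Fin d), ∫ ω, Z t ω j * Z t ω j' ∂μ = if j = j' then 1 else 0)
    (hbound : ∃ C : ℝ, ∀ t ω j, |Z t ω j| ≤ C)
    (hstep : ∀ t, i < t → ∀ᵐ ω ∂μ, α t * ∑ j, sieveLam w J t j * Z t ω j ^ 2 ≤ 1)
    (hrec : ∀ t, i < t → ∀ ω j, η t ω j
      = η (t - 1) ω j
        - α t * sieveLam w J t j * Z t ω j * ∑ j', Z t ω j' * η (t - 1) ω j')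
    (hsupp : ∀ ω (j : Fin d), J i < (j : ℕ) + 1 → η i ω j = 0)
    (hint : ∀ t, Integrable (fun ω => ∑ j, sieveTilde w (η t ω) j ^ 2) μ) :
    (∀ t, i < t → ∀ᵐ ω ∂μ,
      (μ[fun ω' => (∑ j, sieveTilde w (η t ω') j ^ 2)
          / (∑ j, sieveTilde w (η (t - 1) ω') j ^ 2) | ℱ (t - 1)]) ω
        ≤ Real.exp (-(α t * (J t : ℝ) ^ (-(2 * w)))))
    ∧ (∀ t, i ≤ t → ∀ᵐ ω ∂μ,
      (μ[fun ω' => ∑ j, sieveTilde w (η t ω') j ^ 2 | ℱ i]) ω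
        ≤ (∑ j, sieveTilde w (η i ω) j ^ 2)
            * Real.exp (-(∑ l ∈ Finset.Ioc i t, α l * (J l : ℝ) ^ (-(2 * w))))) := by
  have hsupp_prev :
      ∀ t, i < t → ∀ ω (j : Fin d), J t < (j : ℕ) + 1 → η (t - 1) ω j = 0 :=
    fun t ht ω j hj => sieve_support_of_recursion hJmono hrec hsupp (t - 1)
      (Nat.le_sub_one_of_lt ht) ω j ((hJmono (Nat.sub_le t 1)).trans_lt hj)
  have hbound_t : ∀ t, ∃ C, ∀ ω j, |Z t ω j| ≤ C :=
    fun t => hbound.imp fun C hC => hC t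
  have hcontract : ∀ t, i < t → μ[fun ω => ∑ j, sieveTilde w (η t ω) j ^ 2 | ℱ (t - 1)]
      ≤ᵐ[μ] fun ω => Real.exp (-(α t * (J t : ℝ) ^ (-(2 * w))))
        * ∑ j, sieveTilde w (η (t - 1) ω) j ^ 2 := fun t ht =>
    condExp_sum_sieveTilde_sq_step_le (hℱ (t - 1)) hw (hα t)
      (measurable_pi_iff.2 fun j => (hZmeas t j).mono (hℱ t) le_rfl) (hbound_t t) (hZindep t ht)
      (horth t) (hηmeas (t - 1)) (hstep t ht) (hsupp_prev t ht) (hrec t ht) (hint (t - 1)) (hint t)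
  refine ⟨fun t ht => ?_, fun t ht => ?_⟩
  · refine condExp_div_le_of_condExp_le_mul (hℱ (t - 1)) (Real.exp_pos _).le (hint t)
      (stronglyMeasurable_sum_sieveTilde_sq (hηmeas (t - 1)))
      (ae_of_all _ fun ω => Finset.sum_nonneg fun j _ => sq_nonneg _) ?_ (hcontract t ht)
    filter_upwards [hstep t ht] with ω hω
    exact (sum_sieveTilde_sq_le_of_eq_sub (hα t) hω (hsupp_prev t ht ω) (hrec t ht ω)).trans
      (sub_le_self _ (mul_nonneg (hα t) (sq_nonneg _)))
  · filter_upwards [condExp_le_prod_mul_of_condExp_le hℱ hℱmono (fun _ => (Real.exp_pos _).le)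
      hint (stronglyMeasurable_sum_sieveTilde_sq (hηmeas i)) hcontract t ht] with ω hω
    rwa [← Real.exp_sum, Finset.sum_neg_distrib, mul_comm] at hω

/-- **Single-step deviation exponential decay for sieve SGD.**
For the recursion `η_t = η_{t-1} - α_t Λ_t Z_t Z_tᵀ η_{t-1}`, with `Λ_t` the diagonal
matrix with entries `j^{-2w} 1{j ≤ J_t}`, `α_t ‖Λ_t^{1/2} Z_t‖² ≤ 1` a.s., `Z_t` having
orthonormal second moments and independent of the past, with `η̃_t = Λ_t^{-1/2} η_t`:
`E[‖η̃_t‖²/‖η̃_{t-1}‖² | D_{t-1}] ≤ exp(-α_t J_t^{-2w})` a.s., and consequently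
`E[‖η̃_t‖² | D_i] ≤ ‖η̃_i‖² exp(-∑_{l=i+1}^t α_l J_l^{-2w})`. -/
theorem sieve_sgd_deviation_decay
    {Ω : Type*} [m0 : MeasurableSpace Ω] (μ : Measure Ω) [IsProbabilityMeasure μ]
    (d : ℕ) (w : ℝ) (hw : 0 ≤ w)
    (J : ℕ → ℕ) (hJmono : Monotone J) (hJpos : ∀ t, 1 ≤ J t)
    (α : ℕ → ℝ) (hα : ∀ t, 0 ≤ α t)
    (ℱ : ℕ → MeasurableSpace Ω) (hℱ : ∀ t, ℱ t ≤ m0) (hℱmono : Monotone ℱ)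
    (Z η : ℕ → Ω → Fin d → ℝ) (i : ℕ)
    (hZmeas : ∀ t j, Measurable[ℱ t] fun ω => Z t ω j)
    (hηmeas : ∀ t j, Measurable[ℱ t] fun ω => η t ω j)
    (hZindep : ∀ t, i < t →
      Indep (MeasurableSpace.comap (Z t) MeasurableSpace.pi) (ℱ (t - 1)) μ)
    (horth : ∀ t (j j' : Fin d), ∫ ω, Z t ω j * Z t ω j' ∂μ = if j = j' then 1 else 0)
    (hbound : ∃ C : ℝ, ∀ t ω j, |Z t ω j| ≤ C)
    (hstep : ∀ t, i < t → ∀ᵐ ω ∂μ, α t * ∑ j, sieveLam w J t j * Z t ω j ^ 2 ≤ 1)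
    (hrec : ∀ t, i < t → ∀ ω j, η t ω j
      = η (t - 1) ω j
        - α t * sieveLam w J t j * Z t ω j * ∑ j', Z t ω j' * η (t - 1) ω j')
    (hsupp : ∀ ω (j : Fin d), J i < (j : ℕ) + 1 → η i ω j = 0)
    (hint : ∀ t, Integrable (fun ω => ∑ j, sieveTilde w (η t ω) j ^ 2) μ) :
    (∀ t, i < t → ∀ᵐ ω ∂μ,
      (μ[fun ω' => (∑ j, sieveTilde w (η t ω') j ^ 2)
          / (∑ j, sieveTilde w (η (t - 1) ω') j ^ 2) | ℱ (t - 1)]) ω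
        ≤ Real.exp (-(α t * (J t : ℝ) ^ (-(2 * w)))))
    ∧ (∀ t, i ≤ t → ∀ᵐ ω ∂μ,
      (μ[fun ω' => ∑ j, sieveTilde w (η t ω') j ^ 2 | ℱ i]) ω
        ≤ (∑ j, sieveTilde w (η i ω) j ^ 2)
            * Real.exp (-(∑ l ∈ Finset.Ioc i t, α l * (J l : ℝ) ^ (-(2 * w))))) :=
  sieve_sgd_deviation_decay_general (m0 := m0) μ d w hw J hJmono α hα ℱ hℱ hℱmono Z η i hZmeas
    hηmeas hZindep horth hbound hstep hrec hsupp hint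
end
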